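/- arXiv:2008.07898 — 4 statements merged into one kernel-verified Lean document; each statement's English description precedes it below -/
import Mathlib

section
/- Let G be a connected graph and U ⊆ V a modulator to cluster graph (G − U is a disjoint union of cliques), with U nonempty. If there is a shortest path P in G with ecc_G(P) = k, then there is a shortest path P' containing at least one vertex of U with ecc_G(P') ≤ max{k, 1}. -/
/-!
A shortest path avoiding `U` lies in one clique of `G - U`, so it is a single vertex `a` or an
edge `ab`, and every vertex is within `k` of `a` or `b`. If every vertex is within `max k 1` of
`a`, a shortest path from `a` to any vertex of `U` will do. Otherwise some `x` is farther than
`max k 1` from `a`, hence at distance `d(x, a) - 1 ≤ k` from `b`; a shortest `x`–`b` path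
extended by the edge `ba` is then a shortest path through `a` and `b`, and it meets `U`, since
otherwise `x` and `a` would lie in one clique of `G - U`.
-/

open SimpleGraph

/-- `U` is a modulator to cluster graph: every connected component of `G - U` is a clique. -/
def IsClusterModulator {V : Type*} (G : SimpleGraph V) (U : Set V) : Prop :=
  ∀ u v : ↥Uᶜ, (G.induce Uᶜ).Reachable u v → u ≠ v → (G.induce Uᶜ).Adj u v

/-- distance from a vertex to a set of vertices -/
noncomputable def dset {V : Type*} (G : SimpleGraph V) (u : V) (S : Set V) : ℕ∞ :=
  ⨅ s ∈ S, G.edist u s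

/-- eccentricity of a set of vertices -/
noncomputable def eccSet {V : Type*} (G : SimpleGraph V) (S : Set V) : ℕ∞ :=
  ⨆ u, dset G u S

section

variable {V : Type*} {G : SimpleGraph V}

lemma SimpleGraph.Walk.mem_support_of_length_le_one {a b s : V} (P : G.Walk a b)
    (hP : P.length ≤ 1) (hs : s ∈ P.support) : s = a ∨ s = b := by
  cases P with
  | nil => simp_all
  | cons _ Q =>
    cases Q with
    | nil => simpa using hs
    | cons _ _ => simp at hP

lemma dset_le_coe_iff {z : V} {S : Set V} {k : ℕ} :
    dset G z S ≤ k ↔ ∃ s ∈ S, G.edist z s ≤ k := by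
  simp only [dset, ← ENat.lt_add_one_iff (ENat.natCast_ne_top k), iInf_lt_iff, exists_prop]

lemma eccSet_le_coe_iff {S : Set V} {k : ℕ} :
    eccSet G S ≤ k ↔ ∀ z, ∃ s ∈ S, G.edist z s ≤ k := by
  simp only [eccSet, iSup_le_iff, dset_le_coe_iff]

lemma IsClusterModulator.eq_or_adj_of_walk {U : Set V} (hU : IsClusterModulator G U)
    {x y : V} (W : G.Walk x y) (hW : ∀ s ∈ W.support, s ∉ U) : x = y ∨ G.Adj x y := by
  by_cases hxy : x = y
  · exact .inl hxy
  · exact .inr <| hU _ _ (W.induce Uᶜ hW).reachable (by simpa using hxy)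

lemma IsClusterModulator.exists_shortest_path_mem_support {U : Set V}
    (hU : IsClusterModulator G U) {x a b : V} (hba : G.Adj b a) (hfar : 1 < G.dist x a)
    (hcloser : G.dist x b < G.dist x a) :
    ∃ P : G.Walk x a, P.IsPath ∧ P.length = G.dist x a ∧ (∃ u ∈ U, u ∈ P.support) ∧
      b ∈ P.support := by
  have hxb : G.Reachable x b :=
    (Reachable.of_dist_ne_zero (by omega : G.dist x a ≠ 0)).trans hba.reachable.symm
  obtain ⟨Q, hQ⟩ := hxb.exists_walk_length_eq_dist
  set P := Q.concat hba
  have hPlen : P.length = G.dist x a := by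
    have := dist_le P
    rw [Walk.length_concat] at this ⊢
    omega
  refine ⟨P, P.isPath_of_length_eq_dist hPlen, hPlen, ?_, by simp [P, Walk.support_concat]⟩
  by_contra! hPU
  rcases hU.eq_or_adj_of_walk P (fun s hsP hsU => hPU s hsU hsP) with rfl | hxa
  · simp at hfar
  · simp [dist_eq_one_iff_adj.mpr hxa] at hfar

end

theorem stmt5_general {V : Type*} (G : SimpleGraph V) (hG : G.Connected)
    (U : Set V) (hU : IsClusterModulator G U) (hUne : U.Nonempty) (k : ℕ)
    {a b : V} (P : G.Walk a b) (hP : P.IsPath) (hs : P.length = G.dist a b)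
    (hecc : eccSet G {x | x ∈ P.support} = (k : ℕ∞)) :
    ∃ (a' b' : V) (P' : G.Walk a' b'), P'.IsPath ∧ P'.length = G.dist a' b' ∧
      (∃ u ∈ U, u ∈ P'.support) ∧
      eccSet G {x | x ∈ P'.support} ≤ ((max k 1 : ℕ) : ℕ∞) := by
  by_cases hPU : ∃ u ∈ U, u ∈ P.support
  · exact ⟨a, b, P, hP, hs, hPU, hecc.trans_le (by simp)⟩
  push Not at hPU
  have hab := hU.eq_or_adj_of_walk P fun s hsP hsU => hPU s hsU hsP
  have hPlen : P.length ≤ 1 := by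
    rcases hab with rfl | h
    · simp [hs]
    · exact (hs.trans (dist_eq_one_iff_adj.mpr h)).le
  have hnear : ∀ z, G.dist z a ≤ k ∨ G.dist z b ≤ k := by
    intro z
    obtain ⟨s, hsP, hzs⟩ := eccSet_le_coe_iff.mp hecc.le z
    rw [← (hG z s).coe_dist_eq_edist, Nat.cast_le] at hzs
    rcases P.mem_support_of_length_le_one hPlen hsP with rfl | rfl <;> simp [hzs]
  by_cases hclose : ∀ z, G.dist z a ≤ max k 1
  · obtain ⟨u, hu⟩ := hUne
    obtain ⟨Q, hQ, hQlen⟩ := hG.exists_path_of_dist a u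
    refine ⟨a, u, Q, hQ, hQlen, ⟨u, hu, Q.end_mem_support⟩, eccSet_le_coe_iff.mpr fun z => ?_⟩
    exact ⟨a, Q.start_mem_support, by simpa [← (hG z a).coe_dist_eq_edist] using hclose z⟩
  push Not at hclose
  obtain ⟨x, hx⟩ := hclose
  have hxb : G.dist x b ≤ k := (hnear x).resolve_left (by omega)
  have hba : G.Adj b a := (hab.resolve_left (by rintro rfl; omega)).symm
  obtain ⟨P', hP', hP'len, hP'U, hbP'⟩ :=
    hU.exists_shortest_path_mem_support (x := x) hba (by omega) (by omega)
  refine ⟨x, a, P', hP', hP'len, hP'U, eccSet_le_coe_iff.mpr fun z => ?_⟩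
  rcases hnear z with h | h
  · exact ⟨a, P'.end_mem_support, by simp [← (hG z a).coe_dist_eq_edist, h]⟩
  · exact ⟨b, hbP', by simp [← (hG z b).coe_dist_eq_edist, h]⟩

/-- If `G` is connected with nonempty modulator to cluster graph `U` and there is
a shortest path `P` with `ecc_G(P) = k`, then there is a shortest path `P'` containing a vertex
of `U` with `ecc_G(P') ≤ max k 1`. -/
theorem stmt5 {V : Type*} [Fintype V] (G : SimpleGraph V) (hG : G.Connected)
    (U : Set V) (hU : IsClusterModulator G U) (hUne : U.Nonempty) (k : ℕ)
    {a b : V} (P : G.Walk a b) (hP : P.IsPath) (hs : P.length = G.dist a b)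
    (hecc : eccSet G {x | x ∈ P.support} = (k : ℕ∞)) :
    ∃ (a' b' : V) (P' : G.Walk a' b'), P'.IsPath ∧ P'.length = G.dist a' b' ∧
      (∃ u ∈ U, u ∈ P'.support) ∧
      eccSet G {x | x ∈ P'.support} ≤ ((max k 1 : ℕ) : ℕ∞) :=
  stmt5_general G hG U hU hUne k P hP hs hecc
end

section
/- Let G be connected with modulator to cluster graph U, let P be a shortest path in G containing at least one vertex of U, and let V' = V ∖ U. For any vertex u ∈ V', if V(P) ∩ N_G[u] ∩ V' is nonempty, then d_G(u, V(P) ∖ (N_G[u] ∩ V')) ≤ 2. -/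
open SimpleGraph

/-- If a walk's support meets both `A` and its complement, then there is an edge of the
walk crossing from `A` to its complement. -/
lemma walk_cross {V : Type*} {G : SimpleGraph V} {A : Set V} :
    ∀ {a b : V} (p : G.Walk a b), (∃ x ∈ p.support, x ∈ A) → (∃ y ∈ p.support, y ∉ A) →
    ∃ x ∈ p.support, ∃ y ∈ p.support, G.Adj x y ∧ x ∈ A ∧ y ∉ A := by
  intro a b p
  induction p with
  | nil =>
    rintro ⟨x, hx, hxA⟩ ⟨y, hy, hyA⟩
    simp only [SimpleGraph.Walk.support_nil, List.mem_singleton] at hx hy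
    subst hx; subst hy; exact absurd hxA hyA
  | @cons a c b h p ih =>
    rintro ⟨x, hx, hxA⟩ ⟨y, hy, hyA⟩
    simp only [SimpleGraph.Walk.support_cons, List.mem_cons] at hx hy
    by_cases haA : a ∈ A
    · -- witness y : if y = a contradiction, so y ∈ p.support
      rcases hy with rfl | hy
      · exact absurd haA hyA
      by_cases hcA : c ∈ A
      · obtain ⟨x', hx', y', hy', hadj, hxA', hyA'⟩ :=
          ih ⟨c, p.start_mem_support, hcA⟩ ⟨y, hy, hyA⟩
        exact ⟨x', by simp [hx'], y', by simp [hy'], hadj, hxA', hyA'⟩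
      · exact ⟨a, by simp, c, by simp [p.start_mem_support], h, haA, hcA⟩
    · rcases hx with rfl | hx
      · exact absurd hxA haA
      by_cases hcA : c ∈ A
      · exact ⟨c, by simp [p.start_mem_support], a, by simp, h.symm, hcA, haA⟩
      · obtain ⟨x', hx', y', hy', hadj, hxA', hyA'⟩ :=
          ih ⟨x, hx, hxA⟩ ⟨c, p.start_mem_support, hcA⟩
        exact ⟨x', by simp [hx'], y', by simp [hy'], hadj, hxA', hyA'⟩

/-- With `U` a modulator to cluster graph and `P` a shortest path containing a
vertex of `U`, for any `u ∉ U`, if `V(P) ∩ N[u] ∩ V'` is nonempty (`V' = V ∖ U`), then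
`d_G(u, V(P) ∖ (N[u] ∩ V'))` ≤ 2. -/
theorem stmt6 {V : Type*} [Fintype V] (G : SimpleGraph V) (hG : G.Connected)
    (U : Set V) (hU : IsClusterModulator G U)
    {a b : V} (P : G.Walk a b) (hP : P.IsPath) (hs : P.length = G.dist a b)
    (hPU : ∃ u ∈ U, u ∈ P.support)
    (u : V) (hu : u ∉ U)
    (hne : ({x | x ∈ P.support} ∩ (insert u (G.neighborSet u)) ∩ Uᶜ).Nonempty) :
    dset G u ({x | x ∈ P.support} \ ((insert u (G.neighborSet u)) ∩ Uᶜ)) ≤ 2 := by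
  set A : Set V := (insert u (G.neighborSet u)) ∩ Uᶜ with hA
  obtain ⟨x0, ⟨hx0P, hx0N⟩, hx0U⟩ := hne
  obtain ⟨w, hwU, hwP⟩ := hPU
  have hwA : w ∉ A := fun hw => hw.2 hwU
  obtain ⟨x, hxP, y, hyP, hadj, hxA, hyA⟩ :=
    walk_cross (A := A) P ⟨x0, hx0P, ⟨hx0N, hx0U⟩⟩ ⟨w, hwP, hwA⟩
  have hyS : y ∈ ({v | v ∈ P.support} \ A) := ⟨hyP, hyA⟩
  have h1 : dset G u ({v | v ∈ P.support} \ A) ≤ G.edist u y := by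
    exact iInf₂_le y hyS
  refine h1.trans ?_
  have h2 : G.edist u y ≤ G.edist u x + G.edist x y := G.edist_triangle
  have hux : G.edist u x ≤ 1 := by
    rcases hxA.1 with rfl | hadj'
    · simp [SimpleGraph.edist_self]
    · exact le_of_eq (SimpleGraph.edist_eq_one_iff_adj.mpr hadj')
  have hxy : G.edist x y ≤ 1 := le_of_eq (SimpleGraph.edist_eq_one_iff_adj.mpr hadj)
  calc G.edist u y ≤ G.edist u x + G.edist x y := h2
    _ ≤ 1 + 1 := add_le_add hux hxy
    _ = 2 := by norm_num
end

section
/- Let G be connected with modulator to cluster graph U and let P be a shortest path in G containing a vertex of U. Define L = V(P) ∩ U, R_i = {u ∈ U : d_G(u, V(P)) = i} for i ∈ {1,2}, and δ(u) = min{d_G(u,L), d_G(u,R_1)+1, d_G(u,R_2)+2}. Then for every u ∈ U, δ(u) = d_G(u, V(P)). -/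
/-!
Take a shortest walk from `u ∈ U` to `V(P)` and cut it at its last vertex `w` in `U`. After its
first edge the rest of the walk stays inside `G - U`, hence inside one clique, so
`d(w, V(P)) ≤ 2`: the vertex `w` lies in `L`, `R₁` or `R₂`, and the corresponding term of `δ(u)`
is at most `d(u, V(P))`. Conversely every term of `δ(u)` bounds `d(u, V(P))` from above by the
triangle inequality.
-/

open SimpleGraph

section

variable {V : Type*} {G : SimpleGraph V} {U S T : Set V} {u v x y : V}

lemma dset_le_edist (hv : v ∈ S) : dset G u S ≤ G.edist u v :=
  biInf_le _ hv

lemma dset_le_dset_of_subset (h : S ⊆ T) : dset G u T ≤ dset G u S :=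
  iInf_le_iInf_of_subset h

@[simp]
lemma dset_empty : dset G u ∅ = ⊤ := by
  simp [dset]

lemma exists_edist_eq_dset (hS : S.Nonempty) : ∃ v ∈ S, G.edist u v = dset G u S := by
  simpa [dset, sInf_image] using csInf_mem (hS.image (G.edist u))

lemma nonempty_of_dset_ne_top (h : dset G u S ≠ ⊤) : S.Nonempty :=
  Set.nonempty_iff_ne_empty.2 fun hS ↦ h (hS ▸ dset_empty)

lemma dset_eq_zero_iff : dset G u S = 0 ↔ u ∈ S := by
  refine ⟨fun h ↦ ?_, fun hu ↦ le_antisymm ((dset_le_edist hu).trans_eq edist_self) bot_le⟩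
  obtain ⟨v, hv, huv⟩ := exists_edist_eq_dset (G := G) (u := u)
    (nonempty_of_dset_ne_top (h ▸ ENat.zero_ne_top))
  rwa [edist_eq_zero_iff.1 (huv.trans h)]

lemma dset_le_edist_add_dset : dset G u S ≤ G.edist u v + dset G v S := by
  rcases S.eq_empty_or_nonempty with rfl | hS
  · simp
  obtain ⟨s, hs, hvs⟩ := exists_edist_eq_dset (G := G) (u := v) hS
  calc dset G u S ≤ G.edist u s := dset_le_edist hs
    _ ≤ G.edist u v + G.edist v s := G.edist_triangle
    _ = G.edist u v + dset G v S := by rw [hvs]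

lemma dset_le_dset_add {k : ℕ∞} (hT : ∀ v ∈ T, dset G v S ≤ k) :
    dset G u S ≤ dset G u T + k := by
  rcases T.eq_empty_or_nonempty with rfl | hT'
  · simp
  obtain ⟨v, hv, huv⟩ := exists_edist_eq_dset (G := G) (u := u) hT'
  calc dset G u S ≤ G.edist u v + dset G v S := dset_le_edist_add_dset
    _ ≤ dset G u T + k := by rw [huv]; exact add_le_add le_rfl (hT v hv)

lemma SimpleGraph.Walk.forall_notMem_or_exists_split_at_last_mem (Q : G.Walk x y) :
    (∀ v ∈ Q.support, v ∉ U) ∨ ∃ w ∈ U, ∃ (Q₁ : G.Walk x w) (Q₂ : G.Walk w y),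
      Q₁.length + Q₂.length = Q.length ∧ ∀ v ∈ Q₂.support.tail, v ∉ U := by
  induction Q with
  | @nil x =>
    by_cases hx : x ∈ U
    · exact .inr ⟨x, hx, .nil, .nil, rfl, by simp⟩
    · exact .inl (by simpa using hx)
  | @cons x z y hxz Q ih =>
    rcases ih with hQ | ⟨w, hw, Q₁, Q₂, hlen, hQ₂⟩
    · by_cases hx : x ∈ U
      · exact .inr ⟨x, hx, .nil, .cons hxz Q, by simp, by simpa using hQ⟩
      · exact .inl (by simpa [hx] using hQ)
    · exact .inr ⟨w, hw, .cons hxz Q₁, Q₂, by simp [← hlen]; omega, hQ₂⟩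

lemma SimpleGraph.Walk.exists_split_at_last_mem (Q : G.Walk x y) (hx : x ∈ U) :
    ∃ w ∈ U, ∃ (Q₁ : G.Walk x w) (Q₂ : G.Walk w y),
      Q₁.length + Q₂.length = Q.length ∧ ∀ v ∈ Q₂.support.tail, v ∉ U :=
  Q.forall_notMem_or_exists_split_at_last_mem.resolve_left fun h ↦ h x Q.start_mem_support hx

namespace IsClusterModulator

lemma edist_le_one (hU : IsClusterModulator G U) (Q : G.Walk x y)
    (hQ : ∀ v ∈ Q.support, v ∉ U) : G.edist x y ≤ 1 := by
  rw [edist_le_one_iff_adj_or_eq]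
  by_cases hxy : x = y
  · exact .inr hxy
  · exact .inl (by simpa using hU _ _ (Q.induce Uᶜ hQ).reachable (by simpa using hxy))

lemma edist_le_two (hU : IsClusterModulator G U) (Q : G.Walk x y)
    (hQ : ∀ v ∈ Q.support.tail, v ∉ U) : G.edist x y ≤ 2 := by
  cases Q with
  | nil => simp
  | @cons _ z _ hxz Q =>
    calc G.edist x y ≤ G.edist x z + G.edist z y := G.edist_triangle
      _ ≤ 1 + 1 := add_le_add (edist_le_one_iff_adj_or_eq.2 (.inl hxz))
          (hU.edist_le_one Q (by simpa using hQ))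
      _ = 2 := by norm_num

lemma exists_edist_add_dset_le (hU : IsClusterModulator G U) (hu : u ∈ U)
    (h : dset G u S ≠ ⊤) :
    ∃ w ∈ U, dset G w S ≤ 2 ∧ G.edist u w + dset G w S ≤ dset G u S := by
  obtain ⟨s, hs, hus⟩ := exists_edist_eq_dset (G := G) (u := u) (nonempty_of_dset_ne_top h)
  obtain ⟨Q, hQ⟩ := exists_walk_of_edist_ne_top (hus ▸ h)
  obtain ⟨w, hw, Q₁, Q₂, hlen, hQ₂⟩ := Q.exists_split_at_last_mem hu
  refine ⟨w, hw, (dset_le_edist hs).trans (hU.edist_le_two Q₂ hQ₂), ?_⟩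
  calc G.edist u w + dset G w S ≤ Q₁.length + Q₂.length :=
        add_le_add (edist_le Q₁) ((dset_le_edist hs).trans (edist_le Q₂))
    _ = dset G u S := by rw [← hus, ← hQ, ← hlen, Nat.cast_add]

theorem min_dset_eq_dset (hU : IsClusterModulator G U) (hu : u ∈ U) :
    min (dset G u (S ∩ U))
        (min (dset G u {w | w ∈ U ∧ dset G w S = 1} + 1)
             (dset G u {w | w ∈ U ∧ dset G w S = 2} + 2)) = dset G u S := by
  refine le_antisymm ?_ (le_min (dset_le_dset_of_subset Set.inter_subset_left)
    (le_min (dset_le_dset_add fun _ hw ↦ hw.2.le) (dset_le_dset_add fun _ hw ↦ hw.2.le)))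
  rcases eq_or_ne (dset G u S) ⊤ with h | h
  · simp [h]
  obtain ⟨w, hwU, hw₂, hw⟩ := hU.exists_edist_add_dset_le hu h
  obtain ⟨j, hj⟩ : ∃ j : ℕ, dset G w S = j :=
    ⟨_, (ENat.natCast_toNat (ne_top_of_le_ne_top (by decide) hw₂)).symm⟩
  rw [hj] at hw hw₂
  have hj₂ : j ≤ 2 := by exact_mod_cast hw₂
  interval_cases j
  · refine (min_le_left _ _).trans <| (dset_le_edist ?_).trans (by simpa using hw)
    exact ⟨dset_eq_zero_iff.1 hj, hwU⟩
  · refine (min_le_right _ _).trans <| (min_le_left _ _).trans <|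
      (add_le_add (dset_le_edist ?_) le_rfl).trans hw
    exact ⟨hwU, hj⟩
  · refine (min_le_right _ _).trans <| (min_le_right _ _).trans <|
      (add_le_add (dset_le_edist ?_) le_rfl).trans hw
    exact ⟨hwU, hj⟩

end IsClusterModulator

end

theorem stmt7_general {V : Type*} (G : SimpleGraph V)
    (U : Set V) (hU : IsClusterModulator G U)
    {a b : V} (P : G.Walk a b) :
    ∀ u ∈ U,
      min (dset G u ({x | x ∈ P.support} ∩ U))
        (min (dset G u {w | w ∈ U ∧ dset G w {x | x ∈ P.support} = 1} + 1)
             (dset G u {w | w ∈ U ∧ dset G w {x | x ∈ P.support} = 2} + 2))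
      = dset G u {x | x ∈ P.support} :=
  fun _ hu ↦ hU.min_dset_eq_dset hu

/-- With `L = V(P) ∩ U`, `Rᵢ = {u ∈ U : d_G(u, V(P)) = i}` and
`δ(u) = min {d(u,L), d(u,R₁)+1, d(u,R₂)+2}`, for every `u ∈ U` we have `δ(u) = d_G(u, V(P))`. -/
theorem stmt7 {V : Type*} [Fintype V] (G : SimpleGraph V) (hG : G.Connected)
    (U : Set V) (hU : IsClusterModulator G U)
    {a b : V} (P : G.Walk a b) (hP : P.IsPath) (hs : P.length = G.dist a b)
    (hPU : ∃ u ∈ U, u ∈ P.support) :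
    ∀ u ∈ U,
      min (dset G u ({x | x ∈ P.support} ∩ U))
        (min (dset G u {w | w ∈ U ∧ dset G w {x | x ∈ P.support} = 1} + 1)
             (dset G u {w | w ∈ U ∧ dset G w {x | x ∈ P.support} = 2} + 2))
      = dset G u {x | x ∈ P.support} :=
  stmt7_general G U hU P
end

section
/- If the maximum leaf number of a connected graph G is ℓ, then the number of distinct shortest paths in G is at most 2^{4ℓ} · n², where n = |V(G)|. -/
open SimpleGraph

/-- The number of leaves (vertices of degree 1) of a graph. -/
noncomputable def leafCount {V : Type*} (H : SimpleGraph V) : ℕ :=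
  {v : V | (H.neighborSet v).ncard = 1}.ncard

/-!
Fix a root `s` and let `c i` be the largest number of neighbours at distance `i + 1` from `s`
of a vertex at distance `i`. A shortest walk ending at `s`, read backwards, moves one layer away
from `s` at each step, so there are at most `∏ i < d, c i` of them of length `d`. Choose in each
layer a vertex ("hub") attaining `c i`, and build a BFS tree from `s` in which every vertex adjacent
to the hub of the previous layer hangs from that hub. A vertex that is nobody's parent is a leaf,
and the hubs have `c i` children each, so the tree has at least `∑ (c i - 1)` leaves. Hence
`∏ c i ≤ 2 ^ ∑ (c i - 1) ≤ 2 ^ ℓ`, and summing over the `n²` pairs of endpoints gives the bound.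
-/

namespace Finset

theorem card_image_add_sum_card_fiber_sub_one_le {α β : Type*} [DecidableEq β]
    (f : α → β) (A : Finset α) (Y : Finset β) :
    #(A.image f) + ∑ y ∈ Y, (#{a ∈ A | f a = y} - 1) ≤ #A := by
  have hfiber : ∀ y ∈ A.image f, 0 < #{a ∈ A | f a = y} := fun y hy => by
    obtain ⟨a, ha, rfl⟩ := mem_image.mp hy
    exact card_pos.mpr ⟨a, mem_filter.mpr ⟨ha, rfl⟩⟩
  have hY : ∑ y ∈ Y, (#{a ∈ A | f a = y} - 1) ≤ ∑ y ∈ A.image f, (#{a ∈ A | f a = y} - 1) := by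
    refine sum_le_sum_of_ne_zero fun y _ hy => ?_
    by_contra hyA
    rw [filter_false_of_mem fun a ha (hay : f a = y) => hyA (hay ▸ mem_image_of_mem f ha)]
      at hy
    simp at hy
  calc #(A.image f) + ∑ y ∈ Y, (#{a ∈ A | f a = y} - 1)
      ≤ ∑ y ∈ A.image f, (1 + (#{a ∈ A | f a = y} - 1)) := by
        rw [sum_add_distrib, ← card_eq_sum_ones]
        exact Nat.add_le_add_left hY _
    _ = ∑ y ∈ A.image f, #{a ∈ A | f a = y} :=
        sum_congr rfl fun y hy => by have := hfiber y hy; omega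
    _ = #A := (card_eq_sum_card_image f A).symm

end Finset

namespace SimpleGraph

open Finset

variable {V : Type*} {G : SimpleGraph V} {s u v w : V} {i : ℕ}

lemma Walk.dist_getVert_of_length_eq_dist (p : G.Walk u v) (hp : p.length = G.dist u v)
    {i : ℕ} (hi : i ≤ p.length) : G.dist u (p.getVert i) = i := by
  have htake := dist_le (p.take i)
  have hdrop := dist_le (p.drop i)
  have htri := (p.take i).reachable.dist_triangle_left v
  rw [Walk.take_length, min_eq_left hi] at htake
  rw [Walk.drop_length] at hdrop
  omega

lemma Connected.exists_adj_dist_add_one_eq (hG : G.Connected) (hv : v ≠ s) :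
    ∃ u, G.Adj u v ∧ G.dist s u + 1 = G.dist s v := by
  obtain ⟨p, hp⟩ := hG.exists_walk_length_eq_dist s v
  have hpos : 0 < p.length := hp ▸ hG.pos_dist_of_ne hv.symm
  have hnil : ¬p.Nil := by rwa [Walk.not_nil_iff_lt_length]
  refine ⟨p.penultimate, p.adj_penultimate hnil, ?_⟩
  have : G.dist s p.penultimate = p.length - 1 := p.dist_getVert_of_length_eq_dist hp (by omega)
  omega

/-- On a cycle, both neighbours of a vertex of maximal rank have rank at most its own. -/
theorem isAcyclic_of_unique_lower_neighbor {H : SimpleGraph V} (r : V → ℕ)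
    (h : ∀ ⦃w u u' : V⦄, H.Adj w u → H.Adj w u' → r u ≤ r w → r u' ≤ r w → u = u') :
    H.IsAcyclic := by
  classical
  intro v c hc
  obtain ⟨w, hw, hmax⟩ := c.support.toFinset.exists_max_image r ⟨v, by simp⟩
  rw [List.mem_toFinset] at hw
  set c' := c.rotate w hw
  have hc' : c'.IsCycle := hc.rotate hw
  have hle : ∀ x ∈ c'.support, r x ≤ r w := fun x hx =>
    hmax x (List.mem_toFinset.mpr ((c.mem_support_rotate_iff w hw).mp hx))
  exact hc'.snd_ne_penultimate <| h (c'.adj_snd hc'.not_nil) (c'.adj_penultimate hc'.not_nil).symm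
    (hle _ (c'.getVert_mem_support 1)) (hle _ (c'.getVert_mem_support _))

variable [Fintype V]

open Classical in
noncomputable def forwardNeighbors (G : SimpleGraph V) (s v : V) : Finset V :=
  {w | G.Adj v w ∧ G.dist s w = G.dist s v + 1}

lemma mem_forwardNeighbors :
    w ∈ G.forwardNeighbors s v ↔ G.Adj v w ∧ G.dist s w = G.dist s v + 1 := by
  simp [forwardNeighbors]

/-- Lists grown at the front from `[s]`, each new vertex one layer further from `s`; they contain
the supports of all shortest walks of length `i` ending at `s`. -/
noncomputable def geodesicSupports (G : SimpleGraph V) (s : V) : ℕ → Finset (List V)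
  | 0 => {[s]}
  | i + 1 =>
    open Classical in
    (G.geodesicSupports s i).biUnion fun l => (G.forwardNeighbors s (l.headD s)).image (· :: l)

lemma mem_geodesicSupports_succ {l : List V} :
    l ∈ G.geodesicSupports s (i + 1) ↔
      ∃ l' ∈ G.geodesicSupports s i, ∃ w ∈ G.forwardNeighbors s (l'.headD s), w :: l' = l := by
  simp [geodesicSupports]

lemma dist_headD_of_mem_geodesicSupports :
    ∀ {i : ℕ} {l : List V}, l ∈ G.geodesicSupports s i → G.dist s (l.headD s) = i
  | 0, l, hl => by simp_all [geodesicSupports]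
  | i + 1, l, hl => by
    obtain ⟨l', hl', w, hw, rfl⟩ := mem_geodesicSupports_succ.mp hl
    rw [List.headD_cons, (mem_forwardNeighbors.mp hw).2, dist_headD_of_mem_geodesicSupports hl']

lemma card_geodesicSupports_le (c : ℕ → ℕ) (hc : ∀ v, #(G.forwardNeighbors s v) ≤ c (G.dist s v))
    (m : ℕ) : #(G.geodesicSupports s m) ≤ ∏ i ∈ range m, c i := by
  classical
  induction m with
  | zero => simp [geodesicSupports]
  | succ m ih =>
    calc #(G.geodesicSupports s (m + 1))
        ≤ ∑ l ∈ G.geodesicSupports s m, #((G.forwardNeighbors s (l.headD s)).image (· :: l)) :=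
          card_biUnion_le
      _ ≤ ∑ _l ∈ G.geodesicSupports s m, c m := sum_le_sum fun l hl =>
          card_image_le.trans (dist_headD_of_mem_geodesicSupports hl ▸ hc _)
      _ ≤ (∏ i ∈ range m, c i) * c m := by rw [sum_const, smul_eq_mul]; gcongr
      _ = ∏ i ∈ range (m + 1), c i := (prod_range_succ c m).symm

lemma Walk.support_mem_geodesicSupports :
    ∀ {u : V} (q : G.Walk u s), q.length = G.dist u s →
      q.support ∈ G.geodesicSupports s q.length
  | _, .nil, _ => by simp [geodesicSupports]
  | u, .cons (v := w) h q, hq => by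
    obtain ⟨r, hr⟩ := q.reachable.exists_walk_length_eq_dist
    have hq' : q.length = G.dist w s := by
      have hcons := dist_le (Walk.cons h r)
      have hdist := dist_le q
      rw [Walk.length_cons] at hq hcons
      omega
    refine mem_geodesicSupports_succ.mpr ⟨q.support, q.support_mem_geodesicSupports hq', u, ?_, rfl⟩
    rw [mem_forwardNeighbors, ← q.cons_tail_support, List.headD_cons, dist_comm (u := s),
      dist_comm (u := s), ← hq', ← hq, Walk.length_cons]
    exact ⟨h.symm, rfl⟩

lemma ncard_le_sum_card_geodesicSupports (S : Set (Σ s t : V, G.Walk s t))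
    (hS : ∀ x ∈ S, x.2.2.length = G.dist x.1 x.2.1) :
    S.ncard ≤ ∑ st : V × V, #(G.geodesicSupports st.1 (G.dist st.2 st.1)) := by
  classical
  let T : Finset (Σ _ : V × V, List V) :=
    univ.sigma fun st => G.geodesicSupports st.1 (G.dist st.2 st.1)
  have hmaps : ∀ x ∈ S, (⟨(x.1, x.2.1), x.2.2.reverse.support⟩ : Σ _ : V × V, List V) ∈ T := by
    rintro ⟨s, t, p⟩ hx
    have hlen : p.reverse.length = G.dist t s := by
      rw [Walk.length_reverse, hS _ hx, dist_comm]
    simpa [T, hlen] using p.reverse.support_mem_geodesicSupports hlen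
  have hinj : S.InjOn fun x => (⟨(x.1, x.2.1), x.2.2.reverse.support⟩ : Σ _ : V × V, List V) := by
    rintro ⟨s, t, p⟩ - ⟨s', t', p'⟩ - h
    simp only [Sigma.mk.injEq, Prod.mk.injEq] at h
    obtain ⟨⟨rfl, rfl⟩, h⟩ := h
    rw [Walk.reverse_injective (Walk.ext_support (eq_of_heq h))]
  calc S.ncard ≤ (T : Set (Σ _ : V × V, List V)).ncard :=
        Set.ncard_le_ncard_of_injOn _ hmaps hinj T.finite_toSet
    _ = _ := by rw [Set.ncard_coe_finset, card_sigma]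

open Classical in
/-- Junk value `s` when no vertex lies at distance `i` from `s`. -/
noncomputable def hub (G : SimpleGraph V) (s : V) (i : ℕ) : V :=
  if h : ∃ v, G.dist s v = i then
    ((univ.filter fun v => G.dist s v = i).exists_max_image (fun v => #(G.forwardNeighbors s v))
      (by simpa [Finset.Nonempty] using h)).choose
  else s

lemma hub_spec (h : ∃ v, G.dist s v = i) :
    G.dist s (G.hub s i) = i ∧ ∀ v, G.dist s v = i →
      #(G.forwardNeighbors s v) ≤ #(G.forwardNeighbors s (G.hub s i)) := by
  classical
  rw [hub, dif_pos h]
  obtain ⟨hmem, hmax⟩ := ((univ.filter fun v => G.dist s v = i).exists_max_image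
    (fun v => #(G.forwardNeighbors s v)) (by simpa [Finset.Nonempty] using h)).choose_spec
  exact ⟨(mem_filter.mp hmem).2, fun v hv => hmax v (by simpa using hv)⟩

lemma dist_hub (hv : G.dist s v = i) : G.dist s (G.hub s i) = i := (hub_spec ⟨v, hv⟩).1

lemma card_forwardNeighbors_le_hub :
    #(G.forwardNeighbors s v) ≤ #(G.forwardNeighbors s (G.hub s (G.dist s v))) :=
  (hub_spec ⟨v, rfl⟩).2 v rfl

/-- Every forward neighbour of a hub picks the hub as its parent: this is what makes the BFS
tree have many leaves. -/
noncomputable def bfsParent (G : SimpleGraph V) (s v : V) : V :=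
  open Classical in
  if G.Adj (G.hub s (G.dist s v - 1)) v then G.hub s (G.dist s v - 1)
  else if h : ∃ u, G.Adj u v ∧ G.dist s u + 1 = G.dist s v then h.choose else v

lemma bfsParent_spec (hG : G.Connected) (hv : v ≠ s) :
    G.Adj (G.bfsParent s v) v ∧ G.dist s (G.bfsParent s v) + 1 = G.dist s v := by
  obtain ⟨u, hu⟩ := hG.exists_adj_dist_add_one_eq hv
  unfold bfsParent
  split_ifs with hhub h
  · exact ⟨hhub, by rw [dist_hub (v := u) (by omega)]; omega⟩
  · exact h.choose_spec
  · exact absurd ⟨u, hu⟩ h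

lemma bfsParent_eq_hub (hw : w ∈ G.forwardNeighbors s (G.hub s i))
    (hi : G.dist s (G.hub s i) = i) : G.bfsParent s w = G.hub s i := by
  obtain ⟨hadj, hdist⟩ := mem_forwardNeighbors.mp hw
  rw [bfsParent, hdist, hi, Nat.add_sub_cancel, if_pos (hi ▸ hadj)]

def bfsTree (G : SimpleGraph V) (s : V) : SimpleGraph V :=
  fromRel fun v u => v ≠ s ∧ G.bfsParent s v = u

@[simp]
lemma bfsTree_adj {a b : V} :
    (G.bfsTree s).Adj a b ↔
      a ≠ b ∧ (a ≠ s ∧ G.bfsParent s a = b ∨ b ≠ s ∧ G.bfsParent s b = a) := by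
  simp [bfsTree]

lemma bfsTree_adj_bfsParent (hG : G.Connected) (hv : v ≠ s) :
    (G.bfsTree s).Adj v (G.bfsParent s v) :=
  bfsTree_adj.mpr ⟨(bfsParent_spec hG hv).1.ne.symm, Or.inl ⟨hv, rfl⟩⟩

lemma bfsTree_le (hG : G.Connected) : G.bfsTree s ≤ G := by
  intro a b hab
  obtain ⟨-, ⟨ha, rfl⟩ | ⟨hb, rfl⟩⟩ := bfsTree_adj.mp hab
  · exact (bfsParent_spec hG ha).1.symm
  · exact (bfsParent_spec hG hb).1

lemma eq_bfsParent_of_bfsTree_adj (hG : G.Connected) {u : V} (h : (G.bfsTree s).Adj w u)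
    (hu : G.dist s u ≤ G.dist s w) : u = G.bfsParent s w := by
  obtain ⟨-, ⟨-, rfl⟩ | ⟨hus, rfl⟩⟩ := bfsTree_adj.mp h
  · rfl
  · have := (bfsParent_spec hG hus).2
    omega

lemma bfsTree_connected (hG : G.Connected) : (G.bfsTree s).Connected := by
  have hreach : ∀ n v, G.dist s v = n → (G.bfsTree s).Reachable v s := by
    intro n
    induction n using Nat.strong_induction_on with
    | _ n ih =>
      intro v hv
      by_cases hvs : v = s
      · exact hvs ▸ Reachable.refl v
      · have := (bfsParent_spec hG hvs).2
        exact (bfsTree_adj_bfsParent hG hvs).reachable.trans (ih _ (by omega) _ rfl)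
  have := hG.nonempty
  exact ⟨fun u v => (hreach _ u rfl).trans (hreach _ v rfl).symm⟩

lemma bfsTree_isTree (hG : G.Connected) : (G.bfsTree s).IsTree :=
  ⟨bfsTree_connected hG, isAcyclic_of_unique_lower_neighbor (G.dist s) fun _ _ _ h h' hu hu' =>
    (eq_bfsParent_of_bfsTree_adj hG h hu).trans (eq_bfsParent_of_bfsTree_adj hG h' hu').symm⟩

lemma ncard_neighborSet_bfsTree_eq_one (hG : G.Connected) (hv : v ≠ s)
    (hchildless : ∀ w, w ≠ s → G.bfsParent s w ≠ v) : ((G.bfsTree s).neighborSet v).ncard = 1 := by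
  rw [Set.ncard_eq_one]
  refine ⟨G.bfsParent s v, Set.eq_singleton_iff_unique_mem.mpr
    ⟨bfsTree_adj_bfsParent hG hv, fun u hu => ?_⟩⟩
  obtain ⟨-, ⟨-, rfl⟩ | ⟨hus, hpu⟩⟩ := bfsTree_adj.mp hu
  · rfl
  · exact absurd hpu (hchildless u hus)

lemma sum_card_forwardNeighbors_hub_sub_one_le_leafCount (hG : G.Connected) {m : ℕ}
    (hm : ∀ i < m, ∃ v, G.dist s v = i) :
    ∑ i ∈ range m, (#(G.forwardNeighbors s (G.hub s i)) - 1) ≤ leafCount (G.bfsTree s) := by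
  classical
  set A := univ.erase s
  have hfiber := card_image_add_sum_card_fiber_sub_one_le (G.bfsParent s) A
    ((range m).image (G.hub s))
  have hdist : ∀ i ∈ range m, G.dist s (G.hub s i) = i := fun i hi =>
    (hub_spec (hm i (mem_range.mp hi))).1
  have hhubs : ∑ i ∈ range m, (#(G.forwardNeighbors s (G.hub s i)) - 1) ≤
      ∑ y ∈ (range m).image (G.hub s), (#{a ∈ A | G.bfsParent s a = y} - 1) := by
    rw [sum_image fun i hi j hj hij =>
      (hdist i hi).symm.trans ((congrArg (G.dist s) hij).trans (hdist j hj))]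
    refine sum_le_sum fun i hi => Nat.sub_le_sub_right (card_le_card fun w hw => ?_) 1
    have hws : w ≠ s := by
      rintro rfl
      simp [mem_forwardNeighbors] at hw
    exact mem_filter.mpr ⟨mem_erase.mpr ⟨hws, mem_univ w⟩, bfsParent_eq_hub hw (hdist i hi)⟩
  have hleaves : #(A \ A.image (G.bfsParent s)) ≤ leafCount (G.bfsTree s) := by
    rw [leafCount, ← Set.ncard_coe_finset]
    refine Set.ncard_le_ncard (fun v hv => ?_) (Set.toFinite _)
    simp only [coe_sdiff, Set.mem_sdiff, mem_coe, A, mem_erase, mem_image, not_exists,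
      not_and] at hv
    exact ncard_neighborSet_bfsTree_eq_one hG hv.1.1 fun w hws => hv.2 w ⟨hws, mem_univ w⟩
  have := le_card_sdiff (A.image (G.bfsParent s)) A
  omega

lemma card_geodesicSupports_le_two_pow_leafCount (hG : G.Connected) (s t : V) :
    #(G.geodesicSupports s (G.dist t s)) ≤ 2 ^ leafCount (G.bfsTree s) := by
  obtain ⟨p, hp⟩ := hG.exists_walk_length_eq_dist s t
  have hlayers : ∀ i < G.dist t s, ∃ v, G.dist s v = i := fun i hi =>
    ⟨p.getVert i, p.dist_getVert_of_length_eq_dist hp (by rw [hp, dist_comm]; omega)⟩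
  calc #(G.geodesicSupports s (G.dist t s))
      ≤ ∏ i ∈ range (G.dist t s), #(G.forwardNeighbors s (G.hub s i)) :=
        card_geodesicSupports_le _ (fun _ => card_forwardNeighbors_le_hub) _
    _ ≤ ∏ i ∈ range (G.dist t s), 2 ^ (#(G.forwardNeighbors s (G.hub s i)) - 1) :=
        prod_le_prod' fun i _ => by
          have := Nat.lt_two_pow_self (n := #(G.forwardNeighbors s (G.hub s i)) - 1)
          omega
    _ = 2 ^ ∑ i ∈ range (G.dist t s), (#(G.forwardNeighbors s (G.hub s i)) - 1) :=
        prod_pow_eq_pow_sum _ _ _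
    _ ≤ 2 ^ leafCount (G.bfsTree s) :=
        pow_le_pow_right₀ one_le_two (sum_card_forwardNeighbors_hub_sub_one_le_leafCount hG hlayers)

end SimpleGraph

/-- if the maximum leaf number of a connected graph `G` is `ℓ` (the maximum, over
all spanning trees `H ≤ G`, of the number of leaves of `H`), then the number of distinct
shortest paths in `G` is at most `2^(4ℓ) · n²`. -/
theorem stmt17 {V : Type*} [Fintype V] (G : SimpleGraph V) (hG : G.Connected) (ℓ : ℕ)
    (hml : IsGreatest {n : ℕ | ∃ H : SimpleGraph V, H ≤ G ∧ H.IsTree ∧ leafCount H = n} ℓ) :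
    {x : Σ s t : V, G.Walk s t |
        x.2.2.IsPath ∧ x.2.2.length = G.dist x.1 x.2.1}.ncard
      ≤ 2 ^ (4 * ℓ) * (Fintype.card V) ^ 2 := by
  have hpair (st : V × V) : (G.geodesicSupports st.1 (G.dist st.2 st.1)).card ≤ 2 ^ (4 * ℓ) :=
    (card_geodesicSupports_le_two_pow_leafCount hG st.1 st.2).trans <|
      pow_le_pow_right₀ one_le_two <|
        (hml.2 ⟨_, bfsTree_le hG, bfsTree_isTree hG, rfl⟩).trans (by omega)
  calc _ ≤ ∑ st : V × V, (G.geodesicSupports st.1 (G.dist st.2 st.1)).card :=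
        ncard_le_sum_card_geodesicSupports _ fun _ hx => hx.2
    _ ≤ ∑ _st : V × V, 2 ^ (4 * ℓ) := Finset.sum_le_sum fun st _ => hpair st
    _ = 2 ^ (4 * ℓ) * (Fintype.card V) ^ 2 := by
        rw [Finset.sum_const, Finset.card_univ, Fintype.card_prod, smul_eq_mul, sq, mul_comm]
end
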